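/- arXiv:1211.0192 — 12 statements merged into one kernel-verified Lean document; each statement's English description precedes it below -/
import Mathlib

section
/- Let X, Y be Hilbert spaces and T : X → Y a bounded linear operator with closed range, and let T† denote its Moore–Penrose inverse. Then for every x ∈ X, the element (I − T†T)x lies in the kernel of T and ‖x − (I − T†T)x‖ ≤ ‖T†‖·‖Tx‖; in particular T has Hyers–Ulam stability with constant ‖T†‖. -/
open ContinuousLinearMap

theorem ContinuousLinearMap.sub_apply_mem_ker_of_comp_comp_eq_self {R M N : Type*} [Ring R]
    [TopologicalSpace M] [AddCommGroup M] [Module R M]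
    [TopologicalSpace N] [AddCommGroup N] [Module R N]
    {T : M →L[R] N} {S : N →L[R] M} (hTST : T ∘L S ∘L T = T) (x : M) :
    x - S (T x) ∈ LinearMap.ker (T : M →ₗ[R] N) := by
  have hx : T (S (T x)) = T x := congrArg (fun U => U x) hTST
  simp [LinearMap.mem_ker, hx]

theorem hyersUlam_of_moorePenrose_general
    {X Y : Type*} [NormedAddCommGroup X] [InnerProductSpace ℝ X]
    [NormedAddCommGroup Y] [InnerProductSpace ℝ Y]
    (T : X →L[ℝ] Y) (T' : Y →L[ℝ] X)
    (h1 : T ∘L T' ∘L T = T) :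
    ∀ x : X, (x - T' (T x)) ∈ LinearMap.ker (T : X →ₗ[ℝ] Y) ∧
      ‖x - (x - T' (T x))‖ ≤ ‖T'‖ * ‖T x‖ := fun x =>
  ⟨sub_apply_mem_ker_of_comp_comp_eq_self h1 x, by
    rw [sub_sub_cancel]
    exact T'.le_opNorm (T x)⟩

/-- If `T` is a bounded operator between Hilbert spaces with closed range and
Moore--Penrose inverse `T'`, then `(I - T'T)x ∈ ker T` and `‖x - (I - T'T)x‖ ≤ ‖T'‖ * ‖T x‖`;
in particular `T` has Hyers--Ulam stability with constant `‖T'‖`. -/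
theorem hyersUlam_of_moorePenrose
    {X Y : Type*} [NormedAddCommGroup X] [InnerProductSpace ℝ X] [CompleteSpace X]
    [NormedAddCommGroup Y] [InnerProductSpace ℝ Y] [CompleteSpace Y]
    (T : X →L[ℝ] Y) (T' : Y →L[ℝ] X)
    (hclosed : IsClosed (LinearMap.range (T : X →ₗ[ℝ] Y) : Set Y))
    (h1 : T ∘L T' ∘L T = T) (h2 : T' ∘L T ∘L T' = T')
    (h3 : adjoint (T ∘L T') = T ∘L T') (h4 : adjoint (T' ∘L T) = T' ∘L T) :
    ∀ x : X, (x - T' (T x)) ∈ LinearMap.ker (T : X →ₗ[ℝ] Y) ∧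
      ‖x - (x - T' (T x))‖ ≤ ‖T'‖ * ‖T x‖ :=
  hyersUlam_of_moorePenrose_general T T' h1
end

section
/- Let X, Y be Hilbert spaces and T : X → Y a bounded linear operator with closed range and Moore–Penrose inverse T†. If K > 0 is any Hyers–Ulam stability constant for T (i.e., for every x ∈ X there exists x₀ ∈ N(T) with ‖x − x₀‖ ≤ K‖Tx‖), then K ≥ ‖T†‖. Consequently the infimum of all Hyers–Ulam stability constants for T equals ‖T†‖. -/
/-!
If `x₀ ∈ N(T)` witnesses the constant `K` at `x = T† y`, then, since `T†T` is the orthogonal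
projection onto `N(T)ᗮ` and `T† y` lies in its range, `‖T† y‖ = ‖T†T (T† y - x₀)‖ ≤ ‖T† y - x₀‖
≤ K ‖T T† y‖ ≤ K ‖y‖`, the last step because `T T†` is an orthogonal projection as well.
Conversely `x₀ = x - T†T x` lies in `N(T)` and shows that every `K ≥ ‖T†‖` is a constant,
so the constants are squeezed between `(‖T†‖, ∞)` and `[‖T†‖, ∞)`.
-/

open ContinuousLinearMap Set

theorem csInf_eq_of_Ioi_subset_of_subset_Ici {α : Type*} [ConditionallyCompleteLinearOrder α]
    [DenselyOrdered α] [NoMaxOrder α] {s : Set α} {b : α} (hIoi : Ioi b ⊆ s)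
    (hIci : s ⊆ Ici b) : sInf s = b :=
  le_antisymm (csInf_Ioi (a := b) ▸ csInf_le_csInf ⟨b, hIci⟩ nonempty_Ioi hIoi)
    (le_csInf (nonempty_Ioi.mono hIoi) hIci)

section NormedSpace

variable {𝕜 E F : Type*} [RCLike 𝕜] [NormedAddCommGroup E] [NormedSpace 𝕜 E]
  [NormedAddCommGroup F] [NormedSpace 𝕜 F]

def IsHyersUlamConstant (T : E →L[𝕜] F) (K : ℝ) : Prop :=
  ∀ x : E, ∃ x₀ ∈ LinearMap.ker (T : E →ₗ[𝕜] F), ‖x - x₀‖ ≤ K * ‖T x‖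

theorem isIdempotentElem_comp_of_comp_comp_eq {A : E →L[𝕜] F} {B : F →L[𝕜] E}
    (h : B ∘L A ∘L B = B) : IsIdempotentElem (B ∘L A) := by
  change (B ∘L A) ∘L (B ∘L A) = B ∘L A
  rw [← comp_assoc, comp_assoc B A B, h]

theorem isHyersUlamConstant_of_norm_le {T : E →L[𝕜] F} {T' : F →L[𝕜] E}
    (h : T ∘L T' ∘L T = T) {K : ℝ} (hK : ‖T'‖ ≤ K) : IsHyersUlamConstant T K := by
  intro x
  refine ⟨x - T' (T x), ?_, ?_⟩
  · simpa [sub_eq_zero] using (congr($h x)).symm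
  · rw [sub_sub_cancel]
    exact (T'.le_opNorm _).trans (by gcongr)

end NormedSpace

section InnerProductSpace

variable {𝕜 E F : Type*} [RCLike 𝕜] [NormedAddCommGroup E] [InnerProductSpace 𝕜 E]
  [CompleteSpace E] [NormedAddCommGroup F] [InnerProductSpace 𝕜 F]

theorem IsStarProjection.norm_apply_le {P : E →L[𝕜] E} (hP : IsStarProjection P) (x : E) :
    ‖P x‖ ≤ ‖x‖ :=
  (P.le_opNorm x).trans (mul_le_of_le_one_left (norm_nonneg x) hP.norm_le)

theorem isStarProjection_comp_of_comp_comp_eq {A : E →L[𝕜] F} {B : F →L[𝕜] E}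
    (h : B ∘L A ∘L B = B) (hadj : adjoint (B ∘L A) = B ∘L A) : IsStarProjection (B ∘L A) :=
  ⟨isIdempotentElem_comp_of_comp_comp_eq h, hadj⟩

theorem norm_le_of_isHyersUlamConstant [CompleteSpace F] {T : E →L[𝕜] F} {T' : F →L[𝕜] E}
    (h1 : T ∘L T' ∘L T = T) (h2 : T' ∘L T ∘L T' = T')
    (h3 : adjoint (T ∘L T') = T ∘L T') (h4 : adjoint (T' ∘L T) = T' ∘L T)
    {K : ℝ} (hK : 0 ≤ K) (hHU : IsHyersUlamConstant T K) : ‖T'‖ ≤ K := by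
  refine T'.opNorm_le_bound hK fun y ↦ ?_
  obtain ⟨x₀, hx₀, hle⟩ := hHU (T' y)
  have hx₀ : T x₀ = 0 := hx₀
  have hy : T' (T (T' y)) = T' y := congr($h2 y)
  calc ‖T' y‖ = ‖(T' ∘L T) (T' y - x₀)‖ := by simp [hx₀, hy]
    _ ≤ ‖T' y - x₀‖ := (isStarProjection_comp_of_comp_comp_eq h2 h4).norm_apply_le _
    _ ≤ K * ‖(T ∘L T') y‖ := hle
    _ ≤ K * ‖y‖ := by
      gcongr
      exact (isStarProjection_comp_of_comp_comp_eq h1 h3).norm_apply_le y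

end InnerProductSpace

theorem stability_constant_ge_moorePenrose_norm_general
    {X Y : Type*} [NormedAddCommGroup X] [InnerProductSpace ℝ X] [CompleteSpace X]
    [NormedAddCommGroup Y] [InnerProductSpace ℝ Y] [CompleteSpace Y]
    (T : X →L[ℝ] Y) (T' : Y →L[ℝ] X)
    (h1 : T ∘L T' ∘L T = T) (h2 : T' ∘L T ∘L T' = T')
    (h3 : adjoint (T ∘L T') = T ∘L T') (h4 : adjoint (T' ∘L T) = T' ∘L T) :
    (∀ K : ℝ, 0 < K →
        (∀ x : X, ∃ x₀ ∈ LinearMap.ker (T : X →ₗ[ℝ] Y), ‖x - x₀‖ ≤ K * ‖T x‖) → ‖T'‖ ≤ K) ∧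
      sInf {K : ℝ | 0 < K ∧ ∀ x : X, ∃ x₀ ∈ LinearMap.ker (T : X →ₗ[ℝ] Y), ‖x - x₀‖ ≤ K * ‖T x‖}
        = ‖T'‖ := by
  have lower : ∀ K : ℝ, 0 < K → IsHyersUlamConstant T K → ‖T'‖ ≤ K :=
    fun K hK ↦ norm_le_of_isHyersUlamConstant h1 h2 h3 h4 hK.le
  refine ⟨lower, csInf_eq_of_Ioi_subset_of_subset_Ici ?_ fun K hK ↦ lower K hK.1 hK.2⟩
  exact fun K hK ↦ ⟨(norm_nonneg T').trans_lt hK, isHyersUlamConstant_of_norm_le h1 hK.le⟩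

/-- Any Hyers--Ulam stability constant `K > 0` for `T` satisfies `K ≥ ‖T'‖`,
where `T'` is the Moore--Penrose inverse of `T`; consequently the infimum of all
Hyers--Ulam stability constants equals `‖T'‖`. -/
theorem stability_constant_ge_moorePenrose_norm
    {X Y : Type*} [NormedAddCommGroup X] [InnerProductSpace ℝ X] [CompleteSpace X]
    [NormedAddCommGroup Y] [InnerProductSpace ℝ Y] [CompleteSpace Y]
    (T : X →L[ℝ] Y) (T' : Y →L[ℝ] X)
    (hclosed : IsClosed (LinearMap.range (T : X →ₗ[ℝ] Y) : Set Y))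
    (h1 : T ∘L T' ∘L T = T) (h2 : T' ∘L T ∘L T' = T')
    (h3 : adjoint (T ∘L T') = T ∘L T') (h4 : adjoint (T' ∘L T) = T' ∘L T) :
    (∀ K : ℝ, 0 < K →
        (∀ x : X, ∃ x₀ ∈ LinearMap.ker (T : X →ₗ[ℝ] Y), ‖x - x₀‖ ≤ K * ‖T x‖) → ‖T'‖ ≤ K) ∧
      sInf {K : ℝ | 0 < K ∧ ∀ x : X, ∃ x₀ ∈ LinearMap.ker (T : X →ₗ[ℝ] Y), ‖x - x₀‖ ≤ K * ‖T x‖}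
        = ‖T'‖ :=
  stability_constant_ge_moorePenrose_norm_general T T' h1 h2 h3 h4
end

section
/- Let X, Y be Hilbert spaces and T : X → Y a bounded linear operator. Then T has Hyers–Ulam stability (there exists K > 0 such that for every x ∈ X there is x₀ ∈ N(T) with ‖x − x₀‖ ≤ K‖Tx‖) if and only if the range of T is closed. -/
/-! Restricted to `(ker T)ᗮ`, `T` becomes injective with the same range, and for `v ⊥ ker T`,
`x₀ ∈ ker T` Pythagoras gives `‖v‖ ≤ ‖v - x₀‖`. So Hyers–Ulam stability of `T` says exactly that
this restriction is bounded below, which for an injective operator between Banach spaces is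
equivalent to closedness of its range by the open mapping theorem. -/

theorem Submodule.norm_le_norm_sub_of_mem_orthogonal {𝕜 E : Type*} [RCLike 𝕜]
    [NormedAddCommGroup E] [InnerProductSpace 𝕜 E] {K : Submodule 𝕜 E} {v x : E}
    (hv : v ∈ Kᗮ) (hx : x ∈ K) : ‖v‖ ≤ ‖v - x‖ := by
  have hvx : inner 𝕜 v (-x) = 0 := by
    rw [inner_neg_right, Submodule.inner_left_of_mem_orthogonal hx hv, neg_zero]
  have pythagoras := norm_add_sq_eq_norm_sq_add_norm_sq_of_inner_eq_zero v (-x) hvx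
  rw [← sub_eq_add_neg, norm_neg] at pythagoras
  refine (mul_self_le_mul_self_iff (norm_nonneg _) (norm_nonneg _)).mpr ?_
  rw [pythagoras]
  exact le_add_of_nonneg_right (mul_self_nonneg _)

namespace ContinuousLinearMap

variable {𝕜 E F : Type*} [RCLike 𝕜] [NormedAddCommGroup E] [InnerProductSpace 𝕜 E]
  [NormedAddCommGroup F] [NormedSpace 𝕜 F] (T : E →L[𝕜] F)

def HyersUlamStable : Prop :=
  ∃ K : ℝ, 0 < K ∧ ∀ x : E, ∃ x₀ ∈ T.ker, ‖x - x₀‖ ≤ K * ‖T x‖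

def restrictOrthogonalKer : T.kerᗮ →L[𝕜] F :=
  T ∘L T.kerᗮ.subtypeL

@[simp]
theorem restrictOrthogonalKer_apply (v : T.kerᗮ) : T.restrictOrthogonalKer v = T v := rfl

theorem injective_restrictOrthogonalKer : Function.Injective T.restrictOrthogonalKer := by
  refine (injective_iff_map_eq_zero _).mpr fun v hv => Subtype.ext ?_
  have hker : (v : E) ∈ T.ker := LinearMap.mem_ker.mpr hv
  exact inner_self_eq_zero.mp (v.2 v hker)

variable [CompleteSpace E]

theorem range_restrictOrthogonalKer :
    Set.range T.restrictOrthogonalKer = Set.range T := by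
  refine subset_antisymm (Set.range_subset_iff.mpr fun v => ⟨v, rfl⟩) ?_
  rintro _ ⟨x, rfl⟩
  obtain ⟨k, hk, v, hv, rfl⟩ := T.ker.exists_add_mem_mem_orthogonal x
  have hTk : T k = 0 := hk
  exact ⟨⟨v, hv⟩, by simp [hTk]⟩

theorem hyersUlamStable_iff_antilipschitz_restrictOrthogonalKer :
    T.HyersUlamStable ↔ ∃ K, AntilipschitzWith K T.restrictOrthogonalKer := by
  constructor
  · rintro ⟨K, -, hK⟩
    refine ⟨K.toNNReal, T.restrictOrthogonalKer.antilipschitz_of_bound fun v => ?_⟩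
    obtain ⟨x₀, hx₀, hle⟩ := hK v
    calc ‖v‖ ≤ ‖(v : E) - x₀‖ := Submodule.norm_le_norm_sub_of_mem_orthogonal v.2 hx₀
      _ ≤ K * ‖T.restrictOrthogonalKer v‖ := hle
      _ ≤ K.toNNReal * ‖T.restrictOrthogonalKer v‖ := by gcongr; exact K.le_coe_toNNReal
  · rintro ⟨K, hK⟩
    refine ⟨K + 1, by positivity, fun x => ?_⟩
    obtain ⟨k, hk, v, hv, rfl⟩ := T.ker.exists_add_mem_mem_orthogonal x
    have hTk : T k = 0 := hk
    refine ⟨k, hk, ?_⟩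
    calc ‖k + v - k‖ = ‖(⟨v, hv⟩ : T.kerᗮ)‖ := by simp
      _ ≤ K * ‖T.restrictOrthogonalKer ⟨v, hv⟩‖ := hK.le_mul_norm (map_zero _) _
      _ = K * ‖T (k + v)‖ := by rw [map_add, hTk, zero_add, restrictOrthogonalKer_apply]
      _ ≤ (K + 1) * ‖T (k + v)‖ := by gcongr; exact le_add_of_nonneg_right zero_le_one

theorem hyersUlamStable_iff_isClosed_range [CompleteSpace F] :
    T.HyersUlamStable ↔ IsClosed (Set.range T) := by
  rw [hyersUlamStable_iff_antilipschitz_restrictOrthogonalKer, ← range_restrictOrthogonalKer,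
    isClosed_range_iff_antilipschitz_of_injective _ T.injective_restrictOrthogonalKer]

end ContinuousLinearMap

/-- A bounded operator between Hilbert spaces has Hyers--Ulam stability if and
only if its range is closed. -/
theorem hyersUlam_iff_closed_range
    {X Y : Type*} [NormedAddCommGroup X] [InnerProductSpace ℝ X] [CompleteSpace X]
    [NormedAddCommGroup Y] [InnerProductSpace ℝ Y] [CompleteSpace Y]
    (T : X →L[ℝ] Y) :
    (∃ K : ℝ, 0 < K ∧ ∀ x : X, ∃ x₀ ∈ LinearMap.ker (T : X →ₗ[ℝ] Y), ‖x - x₀‖ ≤ K * ‖T x‖) ↔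
      IsClosed ((LinearMap.range (T : X →ₗ[ℝ] Y) : Submodule ℝ Y) : Set Y) :=
  T.hyersUlamStable_iff_isClosed_range
end

section
/- Let X be a Hilbert space, M a closed subspace of X, and P : X → X a bounded (not necessarily self-adjoint) idempotent with range M. Then I − (P − P*)² is invertible and the orthogonal projection Q onto M satisfies Q = P P* (I − (P − P*)²)⁻¹ = (I − (P − P*)²)⁻¹ P P*. -/
open ContinuousLinearMap

/-!
Write `T = 1 - (P - P*)²`. Since `P - P*` is skew-adjoint, `T = 1 + (P - P*)* (P - P*)`,
so `⟪T x, x⟫ = ‖x‖² + ‖(P - P*) x‖² ≥ ‖x‖²` and `T` is invertible by Lax–Milgram. Because `P`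
and `Q` are idempotents with the same range, `QP = P` and `PQ = Q`, whence `QP* = (PQ)* = Q`;
expanding gives `QT = PP*`, and taking adjoints `TQ = PP*`.
-/

theorem ContinuousLinearMap.isUnit_one_add_adjoint_mul_self {𝕜 E : Type*} [RCLike 𝕜]
    [NormedAddCommGroup E] [InnerProductSpace 𝕜 E] [CompleteSpace E] (A : E →L[𝕜] E) :
    IsUnit (1 + adjoint A * A) := by
  refine isUnit_of_forall_le_norm_inner_map _ one_pos fun x => ?_
  calc ‖x‖ ^ 2 * ((1 : NNReal) : ℝ) ≤ ‖x‖ ^ 2 + ‖A x‖ ^ 2 := by simp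
    _ = RCLike.re (inner 𝕜 ((1 + adjoint A * A) x) x) := by
      rw [apply_norm_sq_eq_inner_adjoint_left, add_apply, inner_add_left, map_add,
        one_apply_eq_self, inner_self_eq_norm_sq]
      rfl
    _ ≤ ‖inner 𝕜 ((1 + adjoint A * A) x) x‖ := RCLike.re_le_norm _

theorem ContinuousLinearMap.IsIdempotentElem.mul_eq_right_of_range_le {R M : Type*}
    [Semiring R] [TopologicalSpace M] [AddCommMonoid M] [Module R M] {p q : M →L[R] M}
    (hq : IsIdempotentElem q)
    (h : LinearMap.range (p : M →ₗ[R] M) ≤ LinearMap.range (q : M →ₗ[R] M)) : q * p = p :=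
  coe_inj.mp ((LinearMap.IsIdempotentElem.comp_eq_right_iff hq.toLinearMap _).mpr h)

section StarRing

variable {R : Type*} [Ring R] [StarRing R]

theorem one_add_star_mul_self_sub_star (a : R) :
    1 + star (a - star a) * (a - star a) = 1 - (a - star a) ^ 2 := by
  rw [star_sub, star_star, sq]
  noncomm_ring

theorem isSelfAdjoint_one_sub_sub_star_sq (a : R) : IsSelfAdjoint (1 - (a - star a) ^ 2) := by
  rw [← one_add_star_mul_self_sub_star]
  exact (IsSelfAdjoint.one R).add (.star_mul_self _)

variable {p q : R}

theorem mul_one_sub_sub_star_sq_eq (hp : IsIdempotentElem p) (hq : IsSelfAdjoint q)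
    (hqp : q * p = p) (hpq : p * q = q) : q * (1 - (p - star p) ^ 2) = p * star p := by
  have hqp' : q * star p = q := by rw [← hq.star_eq, ← star_mul, hpq, hq.star_eq]
  have expand : q * (1 - (p - star p) ^ 2) =
      q - q * p * p + q * p * star p + q * star p * p - q * star p * star p := by
    noncomm_ring
  rw [expand, hqp, hqp', hp.eq, hqp, hqp']
  abel

theorem one_sub_sub_star_sq_mul_eq (hp : IsIdempotentElem p) (hq : IsSelfAdjoint q)
    (hqp : q * p = p) (hpq : p * q = q) : (1 - (p - star p) ^ 2) * q = p * star p := by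
  have h := congrArg star (mul_one_sub_sub_star_sq_eq hp hq hqp hpq)
  rwa [star_mul, star_mul, star_star, hq.star_eq, (isSelfAdjoint_one_sub_sub_star_sq p).star_eq]
    at h

end StarRing

theorem orthogonalProjection_eq_of_idempotent_general
    {X : Type*} [NormedAddCommGroup X] [InnerProductSpace ℝ X] [CompleteSpace X]
    (M : Submodule ℝ X)
    (P : X →L[ℝ] X) (hP : P * P = P) (hPM : LinearMap.range (P : X →ₗ[ℝ] X) = M) :
    IsUnit (1 - (P - adjoint P) ^ 2) ∧
      ∀ Q : X →L[ℝ] X, Q * Q = Q → adjoint Q = Q → LinearMap.range (Q : X →ₗ[ℝ] X) = M →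
        Q = P * adjoint P * Ring.inverse (1 - (P - adjoint P) ^ 2) ∧
          Q = Ring.inverse (1 - (P - adjoint P) ^ 2) * (P * adjoint P) := by
  simp only [← star_eq_adjoint]
  have hT : IsUnit (1 - (P - star P) ^ 2) := by
    rw [← one_add_star_mul_self_sub_star]
    exact isUnit_one_add_adjoint_mul_self _
  refine ⟨hT, fun Q hQ hQstar hQM => ?_⟩
  have hQself : IsSelfAdjoint Q := hQstar
  have hQP : Q * P = P := IsIdempotentElem.mul_eq_right_of_range_le hQ (by rw [hPM, hQM])
  have hPQ : P * Q = Q := IsIdempotentElem.mul_eq_right_of_range_le hP (by rw [hPM, hQM])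
  have hQT := mul_one_sub_sub_star_sq_eq hP hQself hQP hPQ
  have hTQ := one_sub_sub_star_sq_mul_eq hP hQself hQP hPQ
  exact ⟨(Ring.eq_mul_inverse_iff_mul_eq _ _ _ hT).mpr hQT,
    ((Ring.inverse_mul_eq_iff_eq_mul _ _ _ hT).mpr hTQ.symm).symm⟩

/-- If `P` is a bounded idempotent on a Hilbert space with range the closed
subspace `M`, then `I - (P - P*)²` is invertible and the orthogonal projection `Q` onto `M`
(characterized as the self-adjoint idempotent with range `M`) satisfies
`Q = P P* (I - (P - P*)²)⁻¹ = (I - (P - P*)²)⁻¹ P P*`. -/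
theorem orthogonalProjection_eq_of_idempotent
    {X : Type*} [NormedAddCommGroup X] [InnerProductSpace ℝ X] [CompleteSpace X]
    (M : Submodule ℝ X) (hM : IsClosed (M : Set X))
    (P : X →L[ℝ] X) (hP : P * P = P) (hPM : LinearMap.range (P : X →ₗ[ℝ] X) = M) :
    IsUnit (1 - (P - adjoint P) ^ 2) ∧
      ∀ Q : X →L[ℝ] X, Q * Q = Q → adjoint Q = Q → LinearMap.range (Q : X →ₗ[ℝ] X) = M →
        Q = P * adjoint P * Ring.inverse (1 - (P - adjoint P) ^ 2) ∧
          Q = Ring.inverse (1 - (P - adjoint P) ^ 2) * (P * adjoint P) :=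
  orthogonalProjection_eq_of_idempotent_general M P hP hPM
end

section
/- Let X be a Hilbert space, M a closed subspace, and P ∈ B(X) an idempotent with range M. Then P P* (I − (P − P*)²) = (I − (P − P*)²) P P*. -/
/-!
For any two idempotents `p, q` of a ring, `(p - q)² = p + q - pq - qp` commutes with both `p`
and `q`, hence `1 - (p - q)²` commutes with `pq`. The adjoint of an idempotent is idempotent,
so this applies to `p = P`, `q = P*`.
-/

open ContinuousLinearMap

namespace IsIdempotentElem

variable {R : Type*} [Ring R] {p q : R}

theorem sub_sq (hp : IsIdempotentElem p) (hq : IsIdempotentElem q) :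
    (p - q) ^ 2 = p + q - p * q - q * p := by
  rw [sq, mul_sub, sub_mul, sub_mul, hp.eq, hq.eq]
  abel

theorem commute_sub_sq_left (hp : IsIdempotentElem p) (hq : IsIdempotentElem q) :
    Commute ((p - q) ^ 2) p := by
  rw [Commute, SemiconjBy, hp.sub_sq hq]
  simp only [mul_sub, sub_mul, mul_add, add_mul, ← mul_assoc, hp.eq]
  simp only [mul_assoc, hp.eq]
  abel

theorem commute_sub_sq_right (hp : IsIdempotentElem p) (hq : IsIdempotentElem q) :
    Commute ((p - q) ^ 2) q := by
  simpa only [← neg_sub p q, neg_sq] using hq.commute_sub_sq_left hp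

theorem commute_one_sub_sub_sq_mul (hp : IsIdempotentElem p) (hq : IsIdempotentElem q) :
    Commute (1 - (p - q) ^ 2) (p * q) :=
  ((Commute.one_left _).sub_left (hp.commute_sub_sq_left hq)).mul_right
    ((Commute.one_left _).sub_left (hp.commute_sub_sq_right hq))

end IsIdempotentElem

theorem idempotent_commutation_general
    {X : Type*} [NormedAddCommGroup X] [InnerProductSpace ℝ X] [CompleteSpace X]
    (P : X →L[ℝ] X) (hP : P * P = P) :
    P * adjoint P * (1 - (P - adjoint P) ^ 2)
      = (1 - (P - adjoint P) ^ 2) * (P * adjoint P) := by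
  have hP' : IsIdempotentElem P := hP
  have hPadj : IsIdempotentElem (adjoint P) := by
    rw [← star_eq_adjoint]
    exact IsIdempotentElem.star_iff.mpr hP'
  exact (hP'.commute_one_sub_sub_sq_mul hPadj).symm.eq

/-- If `P` is a bounded idempotent on a Hilbert space with range the closed
subspace `M`, then `P P* (I - (P - P*)²) = (I - (P - P*)²) P P*`. -/
theorem idempotent_commutation
    {X : Type*} [NormedAddCommGroup X] [InnerProductSpace ℝ X] [CompleteSpace X]
    (M : Submodule ℝ X) (hM : IsClosed (M : Set X))
    (P : X →L[ℝ] X) (hP : P * P = P) (hPM : LinearMap.range (P : X →ₗ[ℝ] X) = M) :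
    P * adjoint P * (1 - (P - adjoint P) ^ 2)
      = (1 - (P - adjoint P) ^ 2) * (P * adjoint P) :=
  idempotent_commutation_general P hP
end

section
/- Let X, Y be Banach spaces, T ∈ B(X,Y) with a bounded generalized inverse T⁺ ∈ B(Y,X) (i.e., TT⁺T = T and T⁺TT⁺ = T⁺). Let δT ∈ B(X,Y) with ‖δT‖‖T⁺‖ < 1. Then I + δT T⁺ is invertible in B(Y), and the operator B = T⁺(I + δT T⁺)⁻¹ satisfies B(T + δT)B = B, R(B) = R(T⁺), and N(B) = N(T⁺). -/
/-!
The inverse `C = (1 + δT T⁺)⁻¹` (a Neumann series) fixes `N(T⁺)` pointwise, because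
`1 + δT T⁺` does. Splitting `(T + δT) T⁺ = (T T⁺ - 1) + (1 + δT T⁺)`, where `T T⁺ - 1` maps
into `N(T⁺)` by `T⁺ T T⁺ = T⁺`, gives `B (T + δT) B = B` for `B = T⁺ C`. The range of `B` is
that of `T⁺` since `C` is onto, and `N(B) = N(T⁺)` since `y = C y + δT T⁺ C y`.
-/

open ContinuousLinearMap

namespace ContinuousLinearMap

section Algebraic

variable {R X Y : Type*} [Ring R]
  [TopologicalSpace X] [AddCommGroup X] [Module R X]
  [TopologicalSpace Y] [AddCommGroup Y] [Module R Y]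

def IsOuterInverse (B : Y →L[R] X) (T : X →L[R] Y) : Prop :=
  B ∘L T ∘L B = B

theorem IsOuterInverse.apply_apply_apply {B : Y →L[R] X} {T : X →L[R] Y}
    (h : IsOuterInverse B T) (y : Y) : B (T (B y)) = B y :=
  congr($h y)

variable [ContinuousAdd Y]

theorem ring_inverse_apply_apply {a : Y →L[R] Y} (ha : IsUnit a) (y : Y) :
    Ring.inverse a (a y) = y := by
  simpa using congr($(Ring.inverse_mul_cancel a ha) y)

theorem apply_ring_inverse_apply {a : Y →L[R] Y} (ha : IsUnit a) (y : Y) :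
    a (Ring.inverse a y) = y := by
  simpa using congr($(Ring.mul_inverse_cancel a ha) y)

variable {T : X →L[R] Y} {T' : Y →L[R] X} {S : X →L[R] Y}

theorem ring_inverse_one_add_comp_apply_of_apply_eq_zero (hA : IsUnit (1 + S ∘L T'))
    {y : Y} (hy : T' y = 0) : Ring.inverse (1 + S ∘L T') y = y := by
  have hfix : (1 + S ∘L T') y = y := by simp [hy]
  conv_lhs => rw [← hfix]
  exact ring_inverse_apply_apply hA y

theorem ker_comp_ring_inverse_one_add_comp (hA : IsUnit (1 + S ∘L T')) :
    LinearMap.ker ((T' ∘L Ring.inverse (1 + S ∘L T') : Y →L[R] X) : Y →ₗ[R] X) =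
      LinearMap.ker (T' : Y →ₗ[R] X) := by
  ext y
  simp only [LinearMap.mem_ker, coe_coe, comp_apply]
  constructor
  · intro hy
    have hy' := apply_ring_inverse_apply hA y
    simp only [add_apply, comp_apply, hy, map_zero, add_zero] at hy'
    rwa [← hy']
  · intro hy
    rwa [ring_inverse_one_add_comp_apply_of_apply_eq_zero hA hy]

theorem range_comp_ring_inverse_one_add_comp (hA : IsUnit (1 + S ∘L T')) :
    LinearMap.range ((T' ∘L Ring.inverse (1 + S ∘L T') : Y →L[R] X) : Y →ₗ[R] X) =
      LinearMap.range (T' : Y →ₗ[R] X) := by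
  refine LinearMap.range_comp_of_range_eq_top _ (LinearMap.range_eq_top.mpr fun y => ?_)
  exact ⟨(1 + S ∘L T') y, ring_inverse_apply_apply hA y⟩

theorem IsOuterInverse.comp_ring_inverse_one_add_comp (hT' : IsOuterInverse T' T)
    (hA : IsUnit (1 + S ∘L T')) :
    IsOuterInverse (T' ∘L Ring.inverse (1 + S ∘L T')) (T + S) := by
  set C := Ring.inverse (1 + S ∘L T')
  ext y
  simp only [comp_apply, add_apply]
  have hker : T' (T (T' (C y)) - C y) = 0 := by
    rw [map_sub, hT'.apply_apply_apply, sub_self]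
  have hsplit : T (T' (C y)) + S (T' (C y)) = (T (T' (C y)) - C y) + (1 + S ∘L T') (C y) := by
    simp only [add_apply, one_apply_eq_self, comp_apply]
    abel
  rw [hsplit, map_add, ring_inverse_apply_apply hA,
    ring_inverse_one_add_comp_apply_of_apply_eq_zero hA hker, sub_add_cancel,
    hT'.apply_apply_apply]

end Algebraic

theorem isUnit_one_add_comp_of_norm_mul_norm_lt_one {𝕜 X Y : Type*} [NontriviallyNormedField 𝕜]
    [SeminormedAddCommGroup X] [NormedSpace 𝕜 X] [NormedAddCommGroup Y] [NormedSpace 𝕜 Y]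
    [CompleteSpace Y] {S : X →L[𝕜] Y} {T' : Y →L[𝕜] X} (h : ‖S‖ * ‖T'‖ < 1) :
    IsUnit (1 + S ∘L T') := by
  have hnorm : ‖-(S ∘L T')‖ < 1 := by
    rw [norm_neg]
    exact (opNorm_comp_le S T').trans_lt h
  simpa [sub_neg_eq_add] using isUnit_one_sub_of_norm_lt_one hnorm

end ContinuousLinearMap

theorem generalized_inverse_perturbation_general
    {X Y : Type*} [NormedAddCommGroup X] [NormedSpace ℝ X]
    [NormedAddCommGroup Y] [NormedSpace ℝ Y] [CompleteSpace Y]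
    (T : X →L[ℝ] Y) (T' : Y →L[ℝ] X) (δT : X →L[ℝ] Y)
    (h2 : T' ∘L T ∘L T' = T')
    (hsmall : ‖δT‖ * ‖T'‖ < 1) :
    IsUnit (1 + δT ∘L T') ∧
      T' ∘L Ring.inverse (1 + δT ∘L T') ∘L (T + δT) ∘L
          (T' ∘L Ring.inverse (1 + δT ∘L T'))
        = T' ∘L Ring.inverse (1 + δT ∘L T') ∧
      LinearMap.range ((T' ∘L Ring.inverse (1 + δT ∘L T') : Y →L[ℝ] X) : Y →ₗ[ℝ] X) = LinearMap.range (T' : Y →ₗ[ℝ] X) ∧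
      LinearMap.ker ((T' ∘L Ring.inverse (1 + δT ∘L T') : Y →L[ℝ] X) : Y →ₗ[ℝ] X) = LinearMap.ker (T' : Y →ₗ[ℝ] X) := by
  have hA := isUnit_one_add_comp_of_norm_mul_norm_lt_one hsmall
  refine ⟨hA, ?_, range_comp_ring_inverse_one_add_comp hA,
    ker_comp_ring_inverse_one_add_comp hA⟩
  simpa only [IsOuterInverse, comp_assoc] using
    (show IsOuterInverse T' T from h2).comp_ring_inverse_one_add_comp hA

/-- If `T⁺` is a bounded generalized inverse of `T` and `‖δT‖‖T⁺‖ < 1`, then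
`I + δT T⁺` is invertible and `B = T⁺ (I + δT T⁺)⁻¹` satisfies `B (T + δT) B = B`,
`R(B) = R(T⁺)` and `N(B) = N(T⁺)`. -/
theorem generalized_inverse_perturbation
    {X Y : Type*} [NormedAddCommGroup X] [NormedSpace ℝ X] [CompleteSpace X]
    [NormedAddCommGroup Y] [NormedSpace ℝ Y] [CompleteSpace Y]
    (T : X →L[ℝ] Y) (T' : Y →L[ℝ] X) (δT : X →L[ℝ] Y)
    (h1 : T ∘L T' ∘L T = T) (h2 : T' ∘L T ∘L T' = T')
    (hsmall : ‖δT‖ * ‖T'‖ < 1) :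
    IsUnit (1 + δT ∘L T') ∧
      T' ∘L Ring.inverse (1 + δT ∘L T') ∘L (T + δT) ∘L
          (T' ∘L Ring.inverse (1 + δT ∘L T'))
        = T' ∘L Ring.inverse (1 + δT ∘L T') ∧
      LinearMap.range ((T' ∘L Ring.inverse (1 + δT ∘L T') : Y →L[ℝ] X) : Y →ₗ[ℝ] X) = LinearMap.range (T' : Y →ₗ[ℝ] X) ∧
      LinearMap.ker ((T' ∘L Ring.inverse (1 + δT ∘L T') : Y →L[ℝ] X) : Y →ₗ[ℝ] X) = LinearMap.ker (T' : Y →ₗ[ℝ] X) :=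
  generalized_inverse_perturbation_general T T' δT h2 hsmall
end

section
/- Let X, Y be Banach spaces, T ∈ B(X,Y) with bounded generalized inverse T⁺, and δT ∈ B(X,Y) with ‖δT‖‖T⁺‖ < 1 and N(T) ⊆ N(δT). Then N(T + δT) = N(T). -/
open ContinuousLinearMap

/-!
If `x ∈ N(T + δT)`, then `x - T⁺T x ∈ N(T) ⊆ N(δT)`, so `T x = -δT x = -δT T⁺ (T x)` and
`‖T x‖ ≤ ‖δT‖‖T⁺‖‖T x‖`; since `‖δT‖‖T⁺‖ < 1` this forces `T x = 0`.
-/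

section

variable {𝕜 X Y : Type*} [NontriviallyNormedField 𝕜]
  [NormedAddCommGroup X] [NormedSpace 𝕜 X] [NormedAddCommGroup Y] [NormedSpace 𝕜 Y]

theorem apply_eq_apply_comp_of_ker_le {T δT : X →L[𝕜] Y} {T' : Y →L[𝕜] X}
    (hT : T ∘L T' ∘L T = T)
    (hker : LinearMap.ker (T : X →ₗ[𝕜] Y) ≤ LinearMap.ker (δT : X →ₗ[𝕜] Y)) (x : X) :
    δT x = δT (T' (T x)) := by
  have hTx : T (T' (T x)) = T x := congr($hT x)
  have hmem : x - T' (T x) ∈ LinearMap.ker (T : X →ₗ[𝕜] Y) := by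
    simp [hTx]
  exact sub_eq_zero.mp (by simpa using hker hmem)

theorem apply_eq_zero_of_add_apply_eq_zero {T δT : X →L[𝕜] Y} {T' : Y →L[𝕜] X}
    (hT : T ∘L T' ∘L T = T) (hsmall : ‖δT‖ * ‖T'‖ < 1)
    (hker : LinearMap.ker (T : X →ₗ[𝕜] Y) ≤ LinearMap.ker (δT : X →ₗ[𝕜] Y)) {x : X}
    (hx : (T + δT) x = 0) : T x = 0 := by
  have hTx : T x = -δT (T' (T x)) := by
    rw [← apply_eq_apply_comp_of_ker_le hT hker x]
    exact eq_neg_of_add_eq_zero_left hx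
  have hle : ‖T x‖ ≤ ‖δT‖ * ‖T'‖ * ‖T x‖ :=
    calc ‖T x‖ = ‖δT (T' (T x))‖ := by rw [hTx, norm_neg, ← hTx]
      _ ≤ ‖δT‖ * ‖T' (T x)‖ := δT.le_opNorm _
      _ ≤ ‖δT‖ * (‖T'‖ * ‖T x‖) := by gcongr; exact T'.le_opNorm _
      _ = ‖δT‖ * ‖T'‖ * ‖T x‖ := by ring
  exact norm_le_zero_iff.mp (by nlinarith [norm_nonneg (T x)])

end

theorem kernel_stability_under_perturbation_general
    {X Y : Type*} [NormedAddCommGroup X] [NormedSpace ℝ X]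
    [NormedAddCommGroup Y] [NormedSpace ℝ Y]
    (T : X →L[ℝ] Y) (T' : Y →L[ℝ] X) (δT : X →L[ℝ] Y)
    (h1 : T ∘L T' ∘L T = T)
    (hsmall : ‖δT‖ * ‖T'‖ < 1)
    (hker : LinearMap.ker (T : X →ₗ[ℝ] Y) ≤ LinearMap.ker (δT : X →ₗ[ℝ] Y)) :
    LinearMap.ker ((T + δT : X →L[ℝ] Y) : X →ₗ[ℝ] Y) = LinearMap.ker (T : X →ₗ[ℝ] Y) := by
  refine le_antisymm (fun x hx => apply_eq_zero_of_add_apply_eq_zero h1 hsmall hker hx)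
    fun x hx => ?_
  have hδx : δT x = 0 := hker hx
  simp_all only [LinearMap.mem_ker, coe_coe, add_apply, add_zero]

/-- If `T⁺` is a bounded generalized inverse of `T`, `‖δT‖‖T⁺‖ < 1` and
`N(T) ⊆ N(δT)`, then `N(T + δT) = N(T)`. -/
theorem kernel_stability_under_perturbation
    {X Y : Type*} [NormedAddCommGroup X] [NormedSpace ℝ X] [CompleteSpace X]
    [NormedAddCommGroup Y] [NormedSpace ℝ Y] [CompleteSpace Y]
    (T : X →L[ℝ] Y) (T' : Y →L[ℝ] X) (δT : X →L[ℝ] Y)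
    (h1 : T ∘L T' ∘L T = T) (h2 : T' ∘L T ∘L T' = T')
    (hsmall : ‖δT‖ * ‖T'‖ < 1)
    (hker : LinearMap.ker (T : X →ₗ[ℝ] Y) ≤ LinearMap.ker (δT : X →ₗ[ℝ] Y)) :
    LinearMap.ker ((T + δT : X →L[ℝ] Y) : X →ₗ[ℝ] Y) = LinearMap.ker (T : X →ₗ[ℝ] Y) :=
  kernel_stability_under_perturbation_general T T' δT h1 hsmall hker
end

section
/- Let X, Y be Banach spaces, T ∈ B(X,Y) with bounded generalized inverse T⁺, and δT ∈ B(X,Y) with ‖δT‖‖T⁺‖ < 1 and R(δT) ⊆ R(T). Then R(T + δT) = R(T). -/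
/-!
Since `R(δT) ⊆ R(T)` and `T T⁺` is the identity on `R(T)`, we have `δT = T T⁺ δT`, hence
`T + δT = T (1 + T⁺ δT)`. As `‖T⁺ δT‖ < 1`, the factor `1 + T⁺ δT` is invertible by the
Neumann series, so it is onto and `T + δT` has the same range as `T`.
-/

open ContinuousLinearMap

section

variable {R M N Z : Type*} [Semiring R]
  [TopologicalSpace M] [AddCommMonoid M] [Module R M]
  [TopologicalSpace N] [AddCommMonoid N] [Module R N]
  [TopologicalSpace Z] [AddCommMonoid Z] [Module R Z]

theorem comp_comp_eq_of_range_le {T : M →L[R] N} {S : N →L[R] M} (hTST : T ∘L S ∘L T = T)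
    {A : Z →L[R] N} (hA : LinearMap.range (A : Z →ₗ[R] N) ≤ LinearMap.range (T : M →ₗ[R] N)) :
    T ∘L S ∘L A = A := by
  ext z
  obtain ⟨x, hx⟩ := hA ⟨z, rfl⟩
  change T x = A z at hx
  rw [comp_apply, comp_apply, ← hx]
  exact DFunLike.congr_fun hTST x

theorem add_eq_comp_one_add_of_range_le [ContinuousAdd M] [ContinuousAdd N] {T : M →L[R] N}
    {S : N →L[R] M} (hTST : T ∘L S ∘L T = T) {δT : M →L[R] N}
    (hδT : LinearMap.range (δT : M →ₗ[R] N) ≤ LinearMap.range (T : M →ₗ[R] N)) :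
    T + δT = T ∘L (1 + S ∘L δT) := by
  rw [comp_add, comp_comp_eq_of_range_le hTST hδT]
  rfl

theorem range_comp_of_isUnit [ContinuousAdd M] {U : M →L[R] M} (hU : IsUnit U) (T : M →L[R] N) :
    LinearMap.range ((T ∘L U : M →L[R] N) : M →ₗ[R] N) = LinearMap.range (T : M →ₗ[R] N) := by
  have hU_surj : Function.Surjective U :=
    ((Module.End.isUnit_iff _).1 (hU.map toLinearMapRingHom)).2
  exact LinearMap.range_comp_of_range_eq_top (T : M →ₗ[R] N) (LinearMap.range_eq_top.2 hU_surj)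

end

theorem isUnit_one_add_comp_of_norm_mul_lt_one {𝕜 X Y : Type*} [NontriviallyNormedField 𝕜]
    [NormedAddCommGroup X] [NormedSpace 𝕜 X] [CompleteSpace X]
    [NormedAddCommGroup Y] [NormedSpace 𝕜 Y] {S : Y →L[𝕜] X} {A : X →L[𝕜] Y}
    (h : ‖A‖ * ‖S‖ < 1) : IsUnit (1 + S ∘L A) := by
  have hSA : ‖-(S ∘L A)‖ < 1 := by
    rw [norm_neg]
    exact (opNorm_comp_le S A).trans_lt (by rwa [mul_comm])
  simpa only [sub_neg_eq_add] using isUnit_one_sub_of_norm_lt_one hSA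

theorem range_stability_under_perturbation_general
    {X Y : Type*} [NormedAddCommGroup X] [NormedSpace ℝ X] [CompleteSpace X]
    [NormedAddCommGroup Y] [NormedSpace ℝ Y]
    (T : X →L[ℝ] Y) (T' : Y →L[ℝ] X) (δT : X →L[ℝ] Y)
    (h1 : T ∘L T' ∘L T = T)
    (hsmall : ‖δT‖ * ‖T'‖ < 1)
    (hran : LinearMap.range (δT : X →ₗ[ℝ] Y) ≤ LinearMap.range (T : X →ₗ[ℝ] Y)) :
    LinearMap.range ((T + δT : X →L[ℝ] Y) : X →ₗ[ℝ] Y) = LinearMap.range (T : X →ₗ[ℝ] Y) := by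
  rw [add_eq_comp_one_add_of_range_le h1 hran]
  exact range_comp_of_isUnit (isUnit_one_add_comp_of_norm_mul_lt_one hsmall) T

/-- If `T⁺` is a bounded generalized inverse of `T`, `‖δT‖‖T⁺‖ < 1` and
`R(δT) ⊆ R(T)`, then `R(T + δT) = R(T)`. -/
theorem range_stability_under_perturbation
    {X Y : Type*} [NormedAddCommGroup X] [NormedSpace ℝ X] [CompleteSpace X]
    [NormedAddCommGroup Y] [NormedSpace ℝ Y] [CompleteSpace Y]
    (T : X →L[ℝ] Y) (T' : Y →L[ℝ] X) (δT : X →L[ℝ] Y)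
    (h1 : T ∘L T' ∘L T = T) (h2 : T' ∘L T ∘L T' = T')
    (hsmall : ‖δT‖ * ‖T'‖ < 1)
    (hran : LinearMap.range (δT : X →ₗ[ℝ] Y) ≤ LinearMap.range (T : X →ₗ[ℝ] Y)) :
    LinearMap.range ((T + δT : X →L[ℝ] Y) : X →ₗ[ℝ] Y) = LinearMap.range (T : X →ₗ[ℝ] Y) :=
  range_stability_under_perturbation_general T T' δT h1 hsmall hran
end

section
/- Let X, Y be Hilbert spaces, and let T, T̄ ∈ B(X,Y) both have closed range with Moore–Penrose inverses T†, T̄†. Then T̄† − T† = T̄†(T̄†)*(T̄ − T)*(I − TT†) + T̄†(T − T̄)T† + (T̄†T̄ − I)(T − T̄)*(T†)*T†, and consequently ‖T̄† − T†‖ ≤ (‖T̄†‖² + ‖T̄†‖‖T†‖ + ‖T†‖²)·‖T̄ − T‖. -/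
/-!
Expanding with the Penrose equations, the three terms equal `S'(1 - TT')`, `S'TT' - S'ST'` and
`S'ST' - T'`, which telescope to `S' - T'`. The point is that `T*(1 - TT') = 0`,
`S'S'*S* = S'`, `(S'S - 1)S* = 0` and `T*T'*T' = T'`. For the estimate, `1 - TT'` and `1 - S'S`
are orthogonal projections, so have norm at most `1`, and taking adjoints preserves norms.
-/

namespace ContinuousLinearMap

variable {𝕜 E F : Type*} [RCLike 𝕜]
  [NormedAddCommGroup E] [InnerProductSpace 𝕜 E] [CompleteSpace E]
  [NormedAddCommGroup F] [InnerProductSpace 𝕜 F] [CompleteSpace F]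

structure IsMoorePenroseInverse (T : E →L[𝕜] F) (T' : F →L[𝕜] E) : Prop where
  comp_inv_comp : T ∘L T' ∘L T = T
  inv_comp_inv : T' ∘L T ∘L T' = T'
  isSelfAdjoint_comp_inv : IsSelfAdjoint (T ∘L T')
  isSelfAdjoint_inv_comp : IsSelfAdjoint (T' ∘L T)

namespace IsMoorePenroseInverse

variable {T : E →L[𝕜] F} {T' : F →L[𝕜] E}

theorem isStarProjection_comp_inv (h : IsMoorePenroseInverse T T') :
    IsStarProjection (T ∘L T') where
  isIdempotentElem := congrArg (T ∘L ·) h.inv_comp_inv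
  isSelfAdjoint := h.isSelfAdjoint_comp_inv

theorem isStarProjection_inv_comp (h : IsMoorePenroseInverse T T') :
    IsStarProjection (T' ∘L T) where
  isIdempotentElem := congrArg (· ∘L T) h.inv_comp_inv
  isSelfAdjoint := h.isSelfAdjoint_inv_comp

theorem adjoint_comp_one_sub_comp_inv (h : IsMoorePenroseInverse T T') :
    adjoint T ∘L (1 - T ∘L T') = 0 := by
  have : adjoint T ∘L T ∘L T' = adjoint T := by
    rw [← h.isSelfAdjoint_comp_inv.adjoint_eq, ← adjoint_comp, comp_assoc, h.comp_inv_comp]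
  rw [comp_sub, this, one_def, comp_id, sub_self]

theorem inv_comp_sub_one_comp_adjoint (h : IsMoorePenroseInverse T T') :
    (T' ∘L T - 1) ∘L adjoint T = 0 := by
  have : (T' ∘L T) ∘L adjoint T = adjoint T := by
    rw [← h.isSelfAdjoint_inv_comp.adjoint_eq, ← adjoint_comp, h.comp_inv_comp]
  rw [sub_comp, this, one_def, id_comp, sub_self]

theorem inv_comp_adjoint_inv_comp_adjoint (h : IsMoorePenroseInverse T T') :
    T' ∘L adjoint T' ∘L adjoint T = T' := by
  rw [← adjoint_comp, h.isSelfAdjoint_comp_inv.adjoint_eq, h.inv_comp_inv]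

theorem adjoint_comp_adjoint_inv_comp_inv (h : IsMoorePenroseInverse T T') :
    adjoint T ∘L adjoint T' ∘L T' = T' := by
  rw [← comp_assoc, ← adjoint_comp, h.isSelfAdjoint_inv_comp.adjoint_eq, comp_assoc,
    h.inv_comp_inv]

variable {S : E →L[𝕜] F} {S' : F →L[𝕜] E}

theorem inv_sub_inv_eq (hT : IsMoorePenroseInverse T T') (hS : IsMoorePenroseInverse S S') :
    S' - T'
      = S' ∘L adjoint S' ∘L adjoint (S - T) ∘L (1 - T ∘L T')
        + S' ∘L (T - S) ∘L T'
        + (S' ∘L S - 1) ∘L adjoint (T - S) ∘L adjoint T' ∘L T' := by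
  have first_term :
      S' ∘L adjoint S' ∘L adjoint (S - T) ∘L (1 - T ∘L T') = S' - S' ∘L T ∘L T' := by
    calc S' ∘L adjoint S' ∘L adjoint (S - T) ∘L (1 - T ∘L T')
        = (S' ∘L adjoint S' ∘L adjoint S) ∘L (1 - T ∘L T') := by
          simp only [map_sub, sub_comp, hT.adjoint_comp_one_sub_comp_inv, sub_zero, comp_assoc]
      _ = S' - S' ∘L T ∘L T' := by
          rw [hS.inv_comp_adjoint_inv_comp_adjoint, comp_sub, one_def, comp_id]
  have third_term :
      (S' ∘L S - 1) ∘L adjoint (T - S) ∘L adjoint T' ∘L T' = S' ∘L S ∘L T' - T' := by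
    calc (S' ∘L S - 1) ∘L adjoint (T - S) ∘L adjoint T' ∘L T'
        = (S' ∘L S - 1) ∘L adjoint T ∘L adjoint T' ∘L T' := by
          simp only [map_sub, sub_comp, comp_sub, ← comp_assoc _ (adjoint S),
            hS.inv_comp_sub_one_comp_adjoint, zero_comp, sub_zero]
      _ = S' ∘L S ∘L T' - T' := by
          rw [hT.adjoint_comp_adjoint_inv_comp_inv, sub_comp, one_def, id_comp, comp_assoc]
  rw [first_term, third_term, sub_comp, comp_sub]
  abel

theorem norm_inv_sub_inv_le (hT : IsMoorePenroseInverse T T') (hS : IsMoorePenroseInverse S S') :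
    ‖S' - T'‖ ≤ (‖S'‖ ^ 2 + ‖S'‖ * ‖T'‖ + ‖T'‖ ^ 2) * ‖S - T‖ := by
  have hP : ‖1 - T ∘L T'‖ ≤ 1 := hT.isStarProjection_comp_inv.one_sub.norm_le
  have hQ : ‖S' ∘L S - 1‖ ≤ 1 := norm_sub_rev (S' ∘L S) 1 ▸
    hS.isStarProjection_inv_comp.one_sub.norm_le
  rw [inv_sub_inv_eq hT hS]
  grw [norm_add₃_le, opNorm_comp_le, opNorm_comp_le, opNorm_comp_le, opNorm_comp_le,
    opNorm_comp_le, opNorm_comp_le, opNorm_comp_le, opNorm_comp_le, hP, hQ]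
  simp only [LinearIsometryEquiv.norm_map, norm_sub_rev T S]
  linarith

end IsMoorePenroseInverse

end ContinuousLinearMap

open ContinuousLinearMap

theorem moorePenrose_difference_formula_general
    {X Y : Type*} [NormedAddCommGroup X] [InnerProductSpace ℝ X] [CompleteSpace X]
    [NormedAddCommGroup Y] [InnerProductSpace ℝ Y] [CompleteSpace Y]
    (T S : X →L[ℝ] Y) (T' S' : Y →L[ℝ] X)
    (hT1 : T ∘L T' ∘L T = T) (hT2 : T' ∘L T ∘L T' = T')
    (hT3 : adjoint (T ∘L T') = T ∘L T') (hT4 : adjoint (T' ∘L T) = T' ∘L T)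
    (hS1 : S ∘L S' ∘L S = S) (hS2 : S' ∘L S ∘L S' = S')
    (hS3 : adjoint (S ∘L S') = S ∘L S') (hS4 : adjoint (S' ∘L S) = S' ∘L S) :
    S' - T'
        = S' ∘L adjoint S' ∘L adjoint (S - T) ∘L (1 - T ∘L T')
          + S' ∘L (T - S) ∘L T'
          + (S' ∘L S - 1) ∘L adjoint (T - S) ∘L adjoint T' ∘L T' ∧
      ‖S' - T'‖ ≤ (‖S'‖ ^ 2 + ‖S'‖ * ‖T'‖ + ‖T'‖ ^ 2) * ‖S - T‖ := by
  have hT : IsMoorePenroseInverse T T' :=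
    ⟨hT1, hT2, isSelfAdjoint_iff'.2 hT3, isSelfAdjoint_iff'.2 hT4⟩
  have hS : IsMoorePenroseInverse S S' :=
    ⟨hS1, hS2, isSelfAdjoint_iff'.2 hS3, isSelfAdjoint_iff'.2 hS4⟩
  exact ⟨hT.inv_sub_inv_eq hS, hT.norm_inv_sub_inv_le hS⟩

/-- For operators `T`, `S` (`S = T̄`) between Hilbert spaces with closed ranges
and Moore--Penrose inverses `T'`, `S'`, one has
`S' - T' = S'(S')*(S - T)*(I - T T') + S'(T - S)T' + (S' S - I)(T - S)*(T')* T'`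
and hence `‖S' - T'‖ ≤ (‖S'‖² + ‖S'‖‖T'‖ + ‖T'‖²) ‖S - T‖`. -/
theorem moorePenrose_difference_formula
    {X Y : Type*} [NormedAddCommGroup X] [InnerProductSpace ℝ X] [CompleteSpace X]
    [NormedAddCommGroup Y] [InnerProductSpace ℝ Y] [CompleteSpace Y]
    (T S : X →L[ℝ] Y) (T' S' : Y →L[ℝ] X)
    (hTclosed : IsClosed (LinearMap.range (T : X →ₗ[ℝ] Y) : Set Y))
    (hSclosed : IsClosed (LinearMap.range (S : X →ₗ[ℝ] Y) : Set Y))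
    (hT1 : T ∘L T' ∘L T = T) (hT2 : T' ∘L T ∘L T' = T')
    (hT3 : adjoint (T ∘L T') = T ∘L T') (hT4 : adjoint (T' ∘L T) = T' ∘L T)
    (hS1 : S ∘L S' ∘L S = S) (hS2 : S' ∘L S ∘L S' = S')
    (hS3 : adjoint (S ∘L S') = S ∘L S') (hS4 : adjoint (S' ∘L S) = S' ∘L S) :
    S' - T'
        = S' ∘L adjoint S' ∘L adjoint (S - T) ∘L (1 - T ∘L T')
          + S' ∘L (T - S) ∘L T'
          + (S' ∘L S - 1) ∘L adjoint (T - S) ∘L adjoint T' ∘L T' ∧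
      ‖S' - T'‖ ≤ (‖S'‖ ^ 2 + ‖S'‖ * ‖T'‖ + ‖T'‖ ^ 2) * ‖S - T‖ :=
  moorePenrose_difference_formula_general T S T' S' hT1 hT2 hT3 hT4 hS1 hS2 hS3 hS4
end

section
/- Let X, Y be Hilbert spaces and T ∈ B(X,Y) with closed range and Moore–Penrose inverse T†. Suppose δT ∈ B(X,Y) with ‖δT‖‖T†‖ < 1 and R(T + δT) ∩ N(T†) = {0}. Then for any x ∈ X, if T(I + T†δT)x = 0 then (T + δT)x = 0; i.e., (I + T†δT)⁻¹ N(T) ⊆ N(T + δT). -/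
open ContinuousLinearMap

namespace LinearMap

variable {R M N : Type*} [Semiring R] [AddCommMonoid M] [AddCommMonoid N] [Module R M]
  [Module R N] {A E : M →ₗ[R] N} {B : N →ₗ[R] M}

theorem map_add_eq_map_map_add_map (hB : B ∘ₗ A ∘ₗ B = B) (x : M) (e : N) :
    B (A x + e) = B (A (x + B e)) := by
  have hBe : B (A (B e)) = B e := LinearMap.congr_fun hB e
  rw [map_add A, map_add B, map_add B, hBe]

theorem apply_eq_zero_of_map_add_map_eq_zero (hB : B ∘ₗ A ∘ₗ B = B)
    (hdisj : range (A + E) ⊓ ker B = ⊥) {x : M} (hx : A (x + B (E x)) = 0) :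
    (A + E) x = 0 := by
  have hker : B ((A + E) x) = 0 := by
    rw [add_apply, map_add_eq_map_map_add_map hB, hx, map_zero]
  have hmem : (A + E) x ∈ range (A + E) ⊓ ker B := ⟨mem_range_self _ x, hker⟩
  rwa [hdisj, Submodule.mem_bot] at hmem

end LinearMap

theorem preimage_kernel_subset_perturbed_kernel_general
    {X Y : Type*} [NormedAddCommGroup X] [InnerProductSpace ℝ X]
    [NormedAddCommGroup Y] [InnerProductSpace ℝ Y]
    (T : X →L[ℝ] Y) (T' : Y →L[ℝ] X) (δT : X →L[ℝ] Y)
    (h2 : T' ∘L T ∘L T' = T')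
    (hdisj : LinearMap.range ((T + δT : X →L[ℝ] Y) : X →ₗ[ℝ] Y) ⊓ LinearMap.ker (T' : Y →ₗ[ℝ] X) = ⊥) :
    ∀ x : X, T ((1 + T' ∘L δT) x) = 0 → (T + δT) x = 0 := by
  intro x hx
  have hB : (T' : Y →ₗ[ℝ] X) ∘ₗ (T : X →ₗ[ℝ] Y) ∘ₗ (T' : Y →ₗ[ℝ] X) = T' := by
    rw [← toLinearMap_comp, ← toLinearMap_comp, h2]
  rw [toLinearMap_add] at hdisj
  -- `hx` is accepted as is: `(1 + T' ∘L δT) x` unfolds to `x + T' (δT x)`.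
  exact LinearMap.apply_eq_zero_of_map_add_map_eq_zero hB hdisj hx

/-- If `‖δT‖‖T†‖ < 1` and `R(T + δT) ∩ N(T†) = {0}`, then for any `x`,
`T (I + T† δT) x = 0` implies `(T + δT) x = 0`; i.e. `(I + T†δT)⁻¹ N(T) ⊆ N(T + δT)`. -/
theorem preimage_kernel_subset_perturbed_kernel
    {X Y : Type*} [NormedAddCommGroup X] [InnerProductSpace ℝ X] [CompleteSpace X]
    [NormedAddCommGroup Y] [InnerProductSpace ℝ Y] [CompleteSpace Y]
    (T : X →L[ℝ] Y) (T' : Y →L[ℝ] X) (δT : X →L[ℝ] Y)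
    (hclosed : IsClosed (LinearMap.range (T : X →ₗ[ℝ] Y) : Set Y))
    (h1 : T ∘L T' ∘L T = T) (h2 : T' ∘L T ∘L T' = T')
    (h3 : adjoint (T ∘L T') = T ∘L T') (h4 : adjoint (T' ∘L T) = T' ∘L T)
    (hsmall : ‖δT‖ * ‖T'‖ < 1)
    (hdisj : LinearMap.range ((T + δT : X →L[ℝ] Y) : X →ₗ[ℝ] Y) ⊓ LinearMap.ker (T' : Y →ₗ[ℝ] X) = ⊥) :
    ∀ x : X, T ((1 + T' ∘L δT) x) = 0 → (T + δT) x = 0 :=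
  preimage_kernel_subset_perturbed_kernel_general T T' δT h2 hdisj
end

section
/- Let X, Y be Hilbert spaces, T ∈ B(X,Y) a finite rank operator with Moore–Penrose inverse T†, and δT ∈ B(X,Y) with ‖δT‖‖T†‖ < 1 and rank(T + δT) = rank(T). Then R(T + δT) ∩ N(T†) = {0}. -/
/-!
For `u ∈ R(T†)` we have `T† T u = u`, so `T† (T + δT) u = 0` gives `u = -T† δT u`, which forces
`u = 0` because `‖δT‖ ‖T†‖ < 1`. Hence `T + δT` is injective on `R(T†)`, a space of dimension
`rank T = rank (T + δT)`, so it maps `R(T†)` onto `R(T + δT)`. A vector `(T + δT) u` with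
`u ∈ R(T†)` that `T†` kills therefore has `u = 0`.
-/

open ContinuousLinearMap

namespace LinearMap

variable {R M N : Type*} [Ring R] [AddCommGroup M] [AddCommGroup N] [Module R M] [Module R N]

theorem finrank_range_eq_of_comp_comp_eq {f : M →ₗ[R] N} {g : N →ₗ[R] M}
    (hf : ∀ x, f (g (f x)) = f x) (hg : ∀ y, g (f (g y)) = g y) :
    Module.finrank R (range f) = Module.finrank R (range g) :=
  LinearEquiv.finrank_eq <| LinearEquiv.ofLinearMap
    (f := g.restrict fun y _ ↦ mem_range_self g y) (g := f.restrict fun x _ ↦ mem_range_self f x)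
    (by ext ⟨_, y, rfl⟩; exact hg y) (by ext ⟨_, x, rfl⟩; exact hf x)

theorem map_eq_range_of_injective_domRestrict {K : Type*} [Field K] [Module K M] [Module K N]
    (f : M →ₗ[K] N) (p : Submodule K M) [FiniteDimensional K (range f)]
    (hinj : Function.Injective (f.domRestrict p))
    (hle : Module.finrank K (range f) ≤ Module.finrank K p) :
    p.map f = range f := by
  refine Submodule.eq_of_le_of_finrank_le map_le_range ?_
  rwa [← range_domRestrict, finrank_range_of_inj hinj]

end LinearMap

namespace ContinuousLinearMap

variable {𝕜 E F : Type*} [NontriviallyNormedField 𝕜] [NormedAddCommGroup E] [NormedSpace 𝕜 E]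
  [NormedAddCommGroup F] [NormedSpace 𝕜 F]

theorem eq_zero_of_apply_add_eq_zero {T δT : E →L[𝕜] F} {T' : F →L[𝕜] E}
    (hsmall : ‖δT‖ * ‖T'‖ < 1) {u : E} (hu : T' (T u) = u) (h : T' ((T + δT) u) = 0) :
    u = 0 := by
  have hneg : u = -T' (δT u) := by
    rwa [add_apply, map_add, hu, add_eq_zero_iff_eq_neg] at h
  have hle : ‖u‖ ≤ ‖δT‖ * ‖T'‖ * ‖u‖ :=
    calc ‖u‖ = ‖T' (δT u)‖ := by rw [hneg, norm_neg, ← hneg]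
      _ ≤ ‖T'‖ * (‖δT‖ * ‖u‖) := le_opNorm_of_le _ (le_opNorm _ _)
      _ = ‖δT‖ * ‖T'‖ * ‖u‖ := by ring
  exact norm_le_zero_iff.mp (by nlinarith [norm_nonneg u])

end ContinuousLinearMap

theorem finite_rank_perturbation_disjoint_general
    {X Y : Type*} [NormedAddCommGroup X] [InnerProductSpace ℝ X]
    [NormedAddCommGroup Y] [InnerProductSpace ℝ Y]
    (T : X →L[ℝ] Y) (T' : Y →L[ℝ] X) (δT : X →L[ℝ] Y)
    [FiniteDimensional ℝ (LinearMap.range ((T + δT : X →L[ℝ] Y) : X →ₗ[ℝ] Y))]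
    (h1 : T ∘L T' ∘L T = T) (h2 : T' ∘L T ∘L T' = T')
    (hsmall : ‖δT‖ * ‖T'‖ < 1)
    (hrank : Module.finrank ℝ (LinearMap.range ((T + δT : X →L[ℝ] Y) : X →ₗ[ℝ] Y))
      = Module.finrank ℝ (LinearMap.range (T : X →ₗ[ℝ] Y))) :
    LinearMap.range ((T + δT : X →L[ℝ] Y) : X →ₗ[ℝ] Y) ⊓ LinearMap.ker (T' : Y →ₗ[ℝ] X) = ⊥ := by
  set S : X →ₗ[ℝ] Y := ((T + δT : X →L[ℝ] Y) : X →ₗ[ℝ] Y)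
  set K := LinearMap.range (T' : Y →ₗ[ℝ] X)
  have hker : ∀ u ∈ K, T' (S u) = 0 → u = 0 := by
    rintro _ ⟨y, rfl⟩
    exact eq_zero_of_apply_add_eq_zero hsmall (DFunLike.congr_fun h2 y)
  have hinj : Function.Injective (S.domRestrict K) := by
    rw [← LinearMap.ker_eq_bot, LinearMap.ker_eq_bot']
    rintro ⟨u, hu⟩ h0
    exact Subtype.ext <| hker u hu <| by rw [show S u = 0 from h0, map_zero]
  have hmap : K.map S = LinearMap.range S :=
    LinearMap.map_eq_range_of_injective_domRestrict S K hinj <| hrank.trans_le <|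
      (LinearMap.finrank_range_eq_of_comp_comp_eq (DFunLike.congr_fun h1)
        (DFunLike.congr_fun h2)).le
  rw [Submodule.eq_bot_iff]
  rintro _ ⟨hy, hyker⟩
  rw [← hmap] at hy
  obtain ⟨u, hu, rfl⟩ := hy
  simp [hker u hu hyker]

/-- If `T` has finite rank with Moore--Penrose inverse `T†`, `‖δT‖‖T†‖ < 1`
and `rank (T + δT) = rank T`, then `R(T + δT) ∩ N(T†) = {0}`. -/
theorem finite_rank_perturbation_disjoint
    {X Y : Type*} [NormedAddCommGroup X] [InnerProductSpace ℝ X] [CompleteSpace X]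
    [NormedAddCommGroup Y] [InnerProductSpace ℝ Y] [CompleteSpace Y]
    (T : X →L[ℝ] Y) (T' : Y →L[ℝ] X) (δT : X →L[ℝ] Y)
    [FiniteDimensional ℝ (LinearMap.range (T : X →ₗ[ℝ] Y))]
    [FiniteDimensional ℝ (LinearMap.range ((T + δT : X →L[ℝ] Y) : X →ₗ[ℝ] Y))]
    (h1 : T ∘L T' ∘L T = T) (h2 : T' ∘L T ∘L T' = T')
    (h3 : adjoint (T ∘L T') = T ∘L T') (h4 : adjoint (T' ∘L T) = T' ∘L T)
    (hsmall : ‖δT‖ * ‖T'‖ < 1)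
    (hrank : Module.finrank ℝ (LinearMap.range ((T + δT : X →L[ℝ] Y) : X →ₗ[ℝ] Y))
      = Module.finrank ℝ (LinearMap.range (T : X →ₗ[ℝ] Y))) :
    LinearMap.range ((T + δT : X →L[ℝ] Y) : X →ₗ[ℝ] Y) ⊓ LinearMap.ker (T' : Y →ₗ[ℝ] X) = ⊥ :=
  finite_rank_perturbation_disjoint_general T T' δT h1 h2 hsmall hrank
end

section
/- Let X, Y be Hilbert spaces, T ∈ B(X,Y) with closed range and Moore–Penrose inverse T†, and δT ∈ B(X,Y) with ‖δT‖‖T†‖ < 1. If dim N(T + δT) = dim N(T) < ∞, then R(T + δT) ∩ N(T†) = {0}. -/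
/-!
With `B = 1 + T†δT`, which is injective since `‖T†δT‖ < 1`, the identity `T T† T = T` shows
that `B` maps `N(T + δT)` into `N(T)`; by equality of the finite dimensions it maps onto `N(T)`.
If `y = (T + δT) x` lies in `N(T†)`, then `T† T B x = T† y = 0` by `T† T T† = T†`, so
`B x ∈ N(T) = B N(T + δT)`, and injectivity of `B` puts `x` in `N(T + δT)`, i.e. `y = 0`.
-/

open ContinuousLinearMap

theorem Submodule.map_eq_of_injective_of_finrank_eq {K V W : Type*} [DivisionRing K]
    [AddCommGroup V] [Module K V] [AddCommGroup W] [Module K W] {f : V →ₗ[K] W}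
    (hf : Function.Injective f) {p : Submodule K V} {q : Submodule K W} [FiniteDimensional K q]
    (hle : p.map f ≤ q) (hd : Module.finrank K p = Module.finrank K q) : p.map f = q :=
  Submodule.eq_of_le_of_finrank_eq hle <| by
    rw [← (Submodule.equivMapOfInjective f hf p).finrank_eq, hd]

namespace ContinuousLinearMap

variable {𝕜 E F : Type*} [NontriviallyNormedField 𝕜] [NormedAddCommGroup E] [NormedSpace 𝕜 E]
  [NormedAddCommGroup F] [NormedSpace 𝕜 F]

theorem injective_one_add_of_norm_lt_one {C : E →L[𝕜] E} (hC : ‖C‖ < 1) :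
    Function.Injective ⇑(1 + C) := by
  refine (injective_iff_map_eq_zero _).2 fun x hx => norm_le_zero_iff.1 ?_
  have hCx : C x = -x := eq_neg_of_add_eq_zero_right hx
  have : ‖x‖ ≤ ‖C‖ * ‖x‖ := by simpa [hCx] using C.le_opNorm x
  nlinarith [norm_nonneg x]

variable {T δT : E →L[𝕜] F} {T' : F →L[𝕜] E}

theorem apply_one_add_comp_eq_zero_of_add_apply_eq_zero (h1 : T ∘L T' ∘L T = T) {x : E}
    (hx : (T + δT) x = 0) : T ((1 + T' ∘L δT) x) = 0 := by
  have hδx : δT x = -T x := eq_neg_of_add_eq_zero_right hx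
  have h1x : T (T' (T x)) = T x := DFunLike.congr_fun h1 x
  simp [hδx, h1x]

theorem apply_one_add_comp_eq_zero_of_apply_add_apply_eq_zero (h1 : T ∘L T' ∘L T = T)
    (h2 : T' ∘L T ∘L T' = T') {x : E} (hx : T' ((T + δT) x) = 0) :
    T ((1 + T' ∘L δT) x) = 0 := by
  have h2δx : T' (T (T' (δT x))) = T' (δT x) := DFunLike.congr_fun h2 (δT x)
  have hT'T : T' (T ((1 + T' ∘L δT) x)) = 0 := by simpa [h2δx] using hx
  rw [← DFunLike.congr_fun h1, comp_apply, comp_apply, hT'T, map_zero]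

end ContinuousLinearMap

theorem equal_nullity_perturbation_disjoint_general
    {X Y : Type*} [NormedAddCommGroup X] [InnerProductSpace ℝ X]
    [NormedAddCommGroup Y] [InnerProductSpace ℝ Y]
    (T : X →L[ℝ] Y) (T' : Y →L[ℝ] X) (δT : X →L[ℝ] Y)
    [FiniteDimensional ℝ (LinearMap.ker (T : X →ₗ[ℝ] Y))]
    (h1 : T ∘L T' ∘L T = T) (h2 : T' ∘L T ∘L T' = T')
    (hsmall : ‖δT‖ * ‖T'‖ < 1)
    (hnull : Module.finrank ℝ (LinearMap.ker ((T + δT : X →L[ℝ] Y) : X →ₗ[ℝ] Y))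
      = Module.finrank ℝ (LinearMap.ker (T : X →ₗ[ℝ] Y))) :
    LinearMap.range ((T + δT : X →L[ℝ] Y) : X →ₗ[ℝ] Y) ⊓ LinearMap.ker (T' : Y →ₗ[ℝ] X) = ⊥ := by
  set B : X →L[ℝ] X := 1 + T' ∘L δT
  have hB : Function.Injective B := injective_one_add_of_norm_lt_one <|
    (opNorm_comp_le T' δT).trans_lt (by rwa [mul_comm])
  have hmap : (LinearMap.ker ((T + δT : X →L[ℝ] Y) : X →ₗ[ℝ] Y)).map (B : X →ₗ[ℝ] X)
      = LinearMap.ker (T : X →ₗ[ℝ] Y) :=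
    Submodule.map_eq_of_injective_of_finrank_eq hB
      (Submodule.map_le_iff_le_comap.2 fun x hx =>
        apply_one_add_comp_eq_zero_of_add_apply_eq_zero h1 hx) hnull
  rw [Submodule.eq_bot_iff]
  rintro _ ⟨⟨x, rfl⟩, hx⟩
  obtain ⟨z, hz, hzx⟩ :=
    hmap.ge (apply_one_add_comp_eq_zero_of_apply_add_apply_eq_zero h1 h2 hx)
  rwa [hB hzx] at hz

/-- If `T` has closed range with Moore--Penrose inverse `T†`, `‖δT‖‖T†‖ < 1`
and `dim N(T + δT) = dim N(T) < ∞`, then `R(T + δT) ∩ N(T†) = {0}`. -/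
theorem equal_nullity_perturbation_disjoint
    {X Y : Type*} [NormedAddCommGroup X] [InnerProductSpace ℝ X] [CompleteSpace X]
    [NormedAddCommGroup Y] [InnerProductSpace ℝ Y] [CompleteSpace Y]
    (T : X →L[ℝ] Y) (T' : Y →L[ℝ] X) (δT : X →L[ℝ] Y)
    (hclosed : IsClosed (LinearMap.range (T : X →ₗ[ℝ] Y) : Set Y))
    [FiniteDimensional ℝ (LinearMap.ker (T : X →ₗ[ℝ] Y))]
    [FiniteDimensional ℝ (LinearMap.ker ((T + δT : X →L[ℝ] Y) : X →ₗ[ℝ] Y))]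
    (h1 : T ∘L T' ∘L T = T) (h2 : T' ∘L T ∘L T' = T')
    (h3 : adjoint (T ∘L T') = T ∘L T') (h4 : adjoint (T' ∘L T) = T' ∘L T)
    (hsmall : ‖δT‖ * ‖T'‖ < 1)
    (hnull : Module.finrank ℝ (LinearMap.ker ((T + δT : X →L[ℝ] Y) : X →ₗ[ℝ] Y))
      = Module.finrank ℝ (LinearMap.ker (T : X →ₗ[ℝ] Y))) :
    LinearMap.range ((T + δT : X →L[ℝ] Y) : X →ₗ[ℝ] Y) ⊓ LinearMap.ker (T' : Y →ₗ[ℝ] X) = ⊥ :=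
  equal_nullity_perturbation_disjoint_general T T' δT h1 h2 hsmall hnull
end
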